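/- Singularity bound for the free graphene propagator at half filling: there exist ε > 0 and C > 0 (depending only on t) such that for each sign ±, all k₀ ∈ ℝ and all k' ∈ ℝ² with |k'| ≤ ε and (k₀, k') ≠ (0,0), the 2×2 matrix i k₀·𝟙 − Ĥ⁰(k_F^± + k') is invertible and its inverse satisfies the operator-norm bound ‖(i k₀·𝟙 − Ĥ⁰(k_F^± + k'))⁻¹‖ ≤ C (k₀² + |k'|²)^{−1/2}. -/

import Mathlib

/-! Near a Fermi point, `Ω(k_F^± + k') = 1 + ω e^{-i k'·ℓ₁} + ω̄ e^{-i k'·ℓ₂}` with `ω` a primitive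
cube root of unity. Since `1 + ω + ω̄ = 0`, `Ω` equals `-i (ω k'·ℓ₁ + ω̄ k'·ℓ₂)` up to an error of
at most `(k'·ℓ₁)² + (k'·ℓ₂)² ≤ (9/2)|k'|²`, and the linear term has modulus `(3/2)|k'|`; hence
`|Ω(k_F^± + k')| ≥ |k'|` for `|k'| ≤ 1/12`.

The matrix `M = i k₀ 𝟙 - Ĥ⁰ = i k₀ 𝟙 + t [[0, Ω̄], [Ω, 0]]` satisfies `M† M = (k₀² + t²|Ω|²) 𝟙`,
so `M` multiplies every norm by `√(k₀² + t²|Ω|²)` and `‖M⁻¹‖ ≤ (k₀² + t²|Ω|²)^{-1/2}`, which is at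
most `min(1, t)⁻¹ (k₀² + |k'|²)^{-1/2}`.
-/

open Real Complex

/-- The dot product of two vectors in `ℝ²`. -/
noncomputable def dot (k l : EuclideanSpace ℝ (Fin 2)) : ℝ := k 0 * l 0 + k 1 * l 1

/-- First basis vector of the triangular lattice. -/
noncomputable def ell1 : EuclideanSpace ℝ (Fin 2) := WithLp.toLp 2 ![3/2, -Real.sqrt 3 / 2]

/-- Second basis vector of the triangular lattice. -/
noncomputable def ell2 : EuclideanSpace ℝ (Fin 2) := WithLp.toLp 2 ![3/2, Real.sqrt 3 / 2]

/-- The function `Ω(k) = 1 + e^{-i k·ℓ₁} + e^{-i k·ℓ₂}`. -/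
noncomputable def Omega (k : EuclideanSpace ℝ (Fin 2)) : ℂ :=
  1 + Complex.exp (-Complex.I * (dot k ell1)) + Complex.exp (-Complex.I * (dot k ell2))

/-- The Fermi points `k_F^±`, parametrized by the sign `s = ±1`. -/
noncomputable def kF (s : ℝ) : EuclideanSpace ℝ (Fin 2) :=
  WithLp.toLp 2 ![2 * π / 3, s * (2 * π / (3 * Real.sqrt 3))]

/-- The Bloch Hamiltonian of graphene with hopping parameter `t`. -/
noncomputable def blochH (t : ℝ) (k : EuclideanSpace ℝ (Fin 2)) : Matrix (Fin 2) (Fin 2) ℂ :=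
  !![0, -t * (starRingEnd ℂ) (Omega k); -t * Omega k, 0]

open ComplexConjugate

theorem ContinuousLinearMap.opNorm_le_inv_of_leftInverse {𝕜 E F : Type*}
    [NontriviallyNormedField 𝕜] [SeminormedAddCommGroup E] [SeminormedAddCommGroup F]
    [NormedSpace 𝕜 E] [NormedSpace 𝕜 F] {A : E → F} {B : F →L[𝕜] E}
    (hAB : Function.LeftInverse A B) {r : ℝ} (hr : 0 < r) (hA : ∀ x, r * ‖x‖ ≤ ‖A x‖) :
    ‖B‖ ≤ r⁻¹ :=
  B.opNorm_le_bound (inv_nonneg.2 hr.le) fun y => by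
    rw [inv_mul_eq_div, le_div_iff₀' hr]
    simpa only [hAB y] using hA (B y)

theorem norm_exp_neg_I_mul_sub_one_add_le {x : ℝ} (hx : |x| ≤ 1) :
    ‖exp (-I * x) - 1 + I * x‖ ≤ x ^ 2 := by
  have hnorm : ‖-I * x‖ = |x| := by simp
  have := norm_exp_sub_one_sub_id_le (hnorm.trans_le hx)
  rw [hnorm, sq_abs] at this
  convert this using 2
  ring

theorem norm_mul_add_conj_mul {ω : ℂ} (hω : ‖ω‖ = 1) (hre : ω.re = -1 / 2) (x y : ℝ) :
    ‖ω * x + conj ω * y‖ = √(x ^ 2 + y ^ 2 - x * y) := by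
  have him : ω.im ^ 2 = 3 / 4 := by
    have := congrArg (· ^ 2) hω
    simp only [Complex.sq_norm, normSq_apply, hre, one_pow] at this
    linarith
  rw [norm_def, normSq_apply]
  congr 1
  simp only [add_re, add_im, mul_re, mul_im, conj_re, conj_im, ofReal_re, ofReal_im, hre]
  linear_combination (x - y) ^ 2 * him

theorem sqrt_sub_le_norm_one_add_mul_exp {ω : ℂ} (hω : ‖ω‖ = 1) (hre : ω.re = -1 / 2) {x y : ℝ}
    (hx : |x| ≤ 1) (hy : |y| ≤ 1) :
    √(x ^ 2 + y ^ 2 - x * y) - (x ^ 2 + y ^ 2) ≤ ‖1 + ω * exp (-I * x) + conj ω * exp (-I * y)‖ := by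
  have hsum : 1 + ω + conj ω = 0 := by
    apply Complex.ext <;> simp [hre]
    norm_num
  -- `E` collects the second-order remainders of the two exponentials
  set E := ω * (exp (-I * x) - 1 + I * x) + conj ω * (exp (-I * y) - 1 + I * y)
  have hsplit : 1 + ω * exp (-I * x) + conj ω * exp (-I * y) = E - I * (ω * x + conj ω * y) := by
    linear_combination hsum
  have hE : ‖E‖ ≤ x ^ 2 + y ^ 2 := by
    refine (norm_add_le _ _).trans ?_
    rw [norm_mul, norm_mul, RCLike.norm_conj, hω, one_mul, one_mul]
    exact add_le_add (norm_exp_neg_I_mul_sub_one_add_le hx) (norm_exp_neg_I_mul_sub_one_add_le hy)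
  have hL : ‖I * (ω * x + conj ω * y)‖ = √(x ^ 2 + y ^ 2 - x * y) := by
    rw [norm_mul, norm_I, one_mul, norm_mul_add_conj_mul hω hre]
  rw [hsplit, norm_sub_rev, ← hL]
  linarith [norm_sub_norm_le (I * (ω * x + conj ω * y)) E]

theorem min_one_mul_sqrt_le {t n A : ℝ} (ht : 0 < t) (hn : 0 ≤ n) (hnA : n ≤ A) (k₀ : ℝ) :
    min 1 t * √(k₀ ^ 2 + n ^ 2) ≤ √(k₀ ^ 2 + (t * A) ^ 2) := by
  have hm₀ : 0 ≤ min 1 t := le_min zero_le_one ht.le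
  rw [← Real.sqrt_sq hm₀, ← Real.sqrt_mul (sq_nonneg _)]
  refine Real.sqrt_le_sqrt ?_
  have hk : min 1 t ^ 2 * k₀ ^ 2 ≤ k₀ ^ 2 :=
    mul_le_of_le_one_left (sq_nonneg k₀) (pow_le_one₀ hm₀ (min_le_left 1 t))
  have hA : min 1 t ^ 2 * n ^ 2 ≤ (t * A) ^ 2 := by
    rw [← mul_pow]
    exact pow_le_pow_left₀ (by positivity) (mul_le_mul (min_le_right 1 t) hnA hn ht.le) 2
  linarith

theorem EuclideanSpace.norm_sq_eq_fin_two (k : EuclideanSpace ℝ (Fin 2)) :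
    ‖k‖ ^ 2 = k 0 ^ 2 + k 1 ^ 2 := by
  simp [EuclideanSpace.norm_sq_eq, Fin.sum_univ_two]

theorem dot_add_left (k k' l : EuclideanSpace ℝ (Fin 2)) : dot (k + k') l = dot k l + dot k' l := by
  simp only [dot, PiLp.add_apply]
  ring

theorem dot_kF_ell1 (s : ℝ) : dot (kF s) ell1 = π - s * (π / 3) := by
  have : √3 ≠ 0 := by positivity
  simp only [dot, kF, ell1, PiLp.toLp_apply, Matrix.cons_val_zero, Matrix.cons_val_one]
  field_simp
  ring

theorem dot_kF_ell2 (s : ℝ) : dot (kF s) ell2 = π + s * (π / 3) := by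
  have : √3 ≠ 0 := by positivity
  simp only [dot, kF, ell2, PiLp.toLp_apply, Matrix.cons_val_zero, Matrix.cons_val_one]
  field_simp

theorem Omega_kF_add (s : ℝ) (k' : EuclideanSpace ℝ (Fin 2)) :
    Omega (kF s + k') = 1 + exp (-I * dot (kF s) ell1) * exp (-I * dot k' ell1)
      + conj (exp (-I * dot (kF s) ell1)) * exp (-I * dot k' ell2) := by
  -- `k_F·ℓ₁ + k_F·ℓ₂ = 2π`
  have hconj : conj (exp (-I * dot (kF s) ell1)) = exp (-I * dot (kF s) ell2) := by
    rw [← exp_conj, ← exp_periodic.int_mul (-1), dot_kF_ell1, dot_kF_ell2]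
    congr 1
    simp only [map_mul, map_neg, conj_I, conj_ofReal]
    push_cast
    ring
  rw [hconj, Omega, dot_add_left, dot_add_left]
  push_cast
  rw [← Complex.exp_add, ← Complex.exp_add]
  ring_nf

theorem re_exp_neg_I_mul_dot_kF_ell1 {s : ℝ} (hs : s = 1 ∨ s = -1) :
    (exp (-I * dot (kF s) ell1)).re = -1 / 2 := by
  rw [show -I * (dot (kF s) ell1 : ℂ) = ((-dot (kF s) ell1 : ℝ) : ℂ) * I by push_cast; ring,
    exp_ofReal_mul_I_re, Real.cos_neg, dot_kF_ell1, Real.cos_pi_sub]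
  rcases hs with rfl | rfl <;> simp [Real.cos_pi_div_three] <;> norm_num

theorem norm_le_norm_Omega_kF_add {s : ℝ} (hs : s = 1 ∨ s = -1) {k' : EuclideanSpace ℝ (Fin 2)}
    (hk' : ‖k'‖ ≤ 1 / 12) : ‖k'‖ ≤ ‖Omega (kF s + k')‖ := by
  set x := dot k' ell1
  set y := dot k' ell2
  set n := ‖k'‖
  have h3 : √3 ^ 2 = 3 := Real.sq_sqrt (by norm_num)
  have hn : n ^ 2 = k' 0 ^ 2 + k' 1 ^ 2 := EuclideanSpace.norm_sq_eq_fin_two k'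
  have hlin : x ^ 2 + y ^ 2 - x * y = (3 / 2 * n) ^ 2 := by
    simp only [x, y, dot, ell1, ell2, PiLp.toLp_apply, Matrix.cons_val_zero, Matrix.cons_val_one]
    linear_combination (-9 / 4) * hn + (3 / 4 * k' 1 ^ 2) * h3
  have hquad : x ^ 2 + y ^ 2 ≤ 9 / 2 * n ^ 2 := by
    have : x ^ 2 + y ^ 2 = 9 / 2 * k' 0 ^ 2 + 3 / 2 * k' 1 ^ 2 := by
      simp only [x, y, dot, ell1, ell2, PiLp.toLp_apply, Matrix.cons_val_zero, Matrix.cons_val_one]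
      linear_combination (k' 1 ^ 2 / 2) * h3
    nlinarith [sq_nonneg (k' 1)]
  have hsmall : x ^ 2 + y ^ 2 ≤ 1 := by nlinarith [norm_nonneg k']
  have hx : |x| ≤ 1 := (sq_le_one_iff_abs_le_one x).1 (by nlinarith [sq_nonneg y])
  have hy : |y| ≤ 1 := (sq_le_one_iff_abs_le_one y).1 (by nlinarith [sq_nonneg x])
  have hω : ‖exp (-I * dot (kF s) ell1)‖ = 1 := by simp [Complex.norm_exp]
  have hbound := sqrt_sub_le_norm_one_add_mul_exp hω (re_exp_neg_I_mul_dot_kF_ell1 hs) hx hy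
  rw [hlin, Real.sqrt_sq (by positivity)] at hbound
  rw [Omega_kF_add]
  nlinarith [mul_nonneg (norm_nonneg k') (sub_nonneg.2 hk')]

noncomputable def diracMatrix (a : ℝ) (c : ℂ) : Matrix (Fin 2) (Fin 2) ℂ :=
  !![I * a, conj c; c, I * a]

theorem sub_blochH_eq_diracMatrix (t k₀ : ℝ) (k : EuclideanSpace ℝ (Fin 2)) :
    (I * (k₀ : ℝ)) • (1 : Matrix (Fin 2) (Fin 2) ℂ) - blochH t k = diracMatrix k₀ (t * Omega k) := by
  ext i j
  fin_cases i <;> fin_cases j <;> simp [blochH, diracMatrix]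

theorem det_diracMatrix (a : ℝ) (c : ℂ) :
    (diracMatrix a c).det = -((a ^ 2 + ‖c‖ ^ 2 : ℝ) : ℂ) := by
  rw [diracMatrix, Matrix.det_fin_two_of, mul_comm (conj c), mul_conj, normSq_eq_norm_sq]
  push_cast
  linear_combination (a : ℂ) ^ 2 * I_sq

theorem isUnit_diracMatrix {a : ℝ} {c : ℂ} (h : a ≠ 0 ∨ c ≠ 0) : IsUnit (diracMatrix a c) := by
  rw [Matrix.isUnit_iff_isUnit_det, det_diracMatrix, isUnit_iff_ne_zero, neg_ne_zero, ofReal_ne_zero]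
  rcases h with h | h <;> positivity

theorem norm_toEuclideanCLM_diracMatrix_apply (a : ℝ) (c : ℂ) (v : EuclideanSpace ℂ (Fin 2)) :
    ‖Matrix.toEuclideanCLM (𝕜 := ℂ) (diracMatrix a c) v‖ = √(a ^ 2 + ‖c‖ ^ 2) * ‖v‖ := by
  rw [← Real.sqrt_sq (norm_nonneg v), ← Real.sqrt_mul (by positivity),
    ← Real.sqrt_sq (norm_nonneg _)]
  congr 1
  simp only [EuclideanSpace.norm_sq_eq, Fin.sum_univ_two, diracMatrix, Matrix.ofLp_toEuclideanCLM,
    Matrix.mulVec, dotProduct, Matrix.of_apply, Matrix.cons_val', Matrix.cons_val_fin_one,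
    Matrix.cons_val_zero, Matrix.cons_val_one, Complex.sq_norm, normSq_apply, add_re, mul_re,
    I_re, ofReal_re, I_im, ofReal_im, mul_im, conj_re, conj_im, add_im]
  ring

theorem norm_toEuclideanCLM_inv_diracMatrix_le {a : ℝ} {c : ℂ} (h : a ≠ 0 ∨ c ≠ 0) :
    ‖Matrix.toEuclideanCLM (𝕜 := ℂ) (diracMatrix a c)⁻¹‖ ≤ (√(a ^ 2 + ‖c‖ ^ 2))⁻¹ := by
  refine ContinuousLinearMap.opNorm_le_inv_of_leftInverse
    (A := Matrix.toEuclideanCLM (𝕜 := ℂ) (diracMatrix a c)) (fun y => ?_) ?_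
    fun v => (norm_toEuclideanCLM_diracMatrix_apply a c v).ge
  · rw [← mul_apply_eq_comp, ← map_mul, Matrix.mul_nonsing_inv _
      ((Matrix.isUnit_iff_isUnit_det _).1 (isUnit_diracMatrix h)), map_one, one_apply_eq_self]
  · rcases h with h | h <;> positivity

/-- Singularity bound for the free graphene propagator at half filling:
near each Fermi point, `i k₀ 𝟙 − Ĥ⁰(k_F^± + k')` is invertible for `(k₀, k') ≠ (0,0)`, and the
operator norm of its inverse is bounded by `C (k₀² + |k'|²)^{-1/2}`. -/
theorem propagator_singularity_bound (t : ℝ) (ht : 0 < t) :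
    ∃ ε > (0:ℝ), ∃ C > (0:ℝ), ∀ s : ℝ, (s = 1 ∨ s = -1) →
      ∀ k₀ : ℝ, ∀ k' : EuclideanSpace ℝ (Fin 2), ‖k'‖ ≤ ε → (k₀ ≠ 0 ∨ k' ≠ 0) →
        IsUnit ((Complex.I * (k₀ : ℝ)) • (1 : Matrix (Fin 2) (Fin 2) ℂ)
            - blochH t (kF s + k')) ∧
        ‖Matrix.toEuclideanCLM (𝕜 := ℂ)
            (((Complex.I * (k₀ : ℝ)) • (1 : Matrix (Fin 2) (Fin 2) ℂ)
              - blochH t (kF s + k'))⁻¹)‖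
          ≤ C / Real.sqrt (k₀ ^ 2 + ‖k'‖ ^ 2) := by
  refine ⟨1 / 12, by norm_num, (min 1 t)⁻¹, by positivity, fun s hs k₀ k' hk' hne => ?_⟩
  have hΩ := norm_le_norm_Omega_kF_add hs hk'
  have hc : ‖(t : ℂ) * Omega (kF s + k')‖ = t * ‖Omega (kF s + k')‖ := by
    rw [norm_mul, norm_real, Real.norm_of_nonneg ht.le]
  have hne' : k₀ ≠ 0 ∨ (t : ℂ) * Omega (kF s + k') ≠ 0 := by
    refine hne.imp_right fun hk'0 => norm_ne_zero_iff.1 (hc ▸ ?_)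
    exact (mul_pos ht ((norm_pos_iff.2 hk'0).trans_le hΩ)).ne'
  rw [sub_blochH_eq_diracMatrix]
  refine ⟨isUnit_diracMatrix hne', (norm_toEuclideanCLM_inv_diracMatrix_le hne').trans ?_⟩
  have hpos : 0 < min 1 t * √(k₀ ^ 2 + ‖k'‖ ^ 2) := by
    have : 0 < min 1 t := lt_min one_pos ht
    rcases hne with h | h
    · positivity
    · have := norm_pos_iff.2 h
      positivity
  rw [div_eq_mul_inv, ← mul_inv, hc]
  exact inv_anti₀ hpos (min_one_mul_sqrt_le ht (norm_nonneg k') hΩ k₀)
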